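/- arXiv:1810.10461 — 7 statements merged into one kernel-verified Lean document; each statement's English description precedes it below -/
import Mathlib

section
/- If A is a subset of an Abelian group G and A is 2-stable (does not have the 2-order property) and A is nonempty, then A satisfies A + A - A ⊆ A, i.e., for all x, y, z in A, y + z - x is in A. -/
/-! If `y + z - x ∉ A` for some `x, y, z ∈ A`, then `a = (0, y - x)` and `b = (z, x)` witness the
2-order property: the four sums `a i + b j` are `z, x, y + z - x, y`. -/

/-- `A ⊆ G` has the `k`-order property if there are `a, b ∈ G^k`
with `a i + b j ∈ A` iff `i ≤ j`. -/
def HasOrderProperty {G : Type*} [AddCommGroup G] (A : Set G) (k : ℕ) : Prop :=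
  ∃ a b : Fin k → G, ∀ i j : Fin k, (a i + b j ∈ A ↔ i ≤ j)

theorem hasOrderProperty_two_iff {G : Type*} [AddCommGroup G] (A : Set G) :
    HasOrderProperty A 2 ↔
      ∃ a₀ a₁ b₀ b₁ : G, a₀ + b₀ ∈ A ∧ a₀ + b₁ ∈ A ∧ a₁ + b₀ ∉ A ∧ a₁ + b₁ ∈ A := by
  constructor
  · rintro ⟨a, b, h⟩
    exact ⟨a 0, a 1, b 0, b 1, (h 0 0).2 le_rfl, (h 0 1).2 (by decide),
      fun h₁₀ => absurd ((h 1 0).1 h₁₀) (by decide), (h 1 1).2 le_rfl⟩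
  · rintro ⟨a₀, a₁, b₀, b₁, h₀₀, h₀₁, h₁₀, h₁₁⟩
    refine ⟨![a₀, a₁], ![b₀, b₁], fun i j => ?_⟩
    fin_cases i <;> fin_cases j <;> simpa

theorem two_stable_closed_general {G : Type*} [AddCommGroup G] (A : Set G)
    (hstab : ¬ HasOrderProperty A 2) :
    ∀ x ∈ A, ∀ y ∈ A, ∀ z ∈ A, y + z - x ∈ A := by
  intro x hx y hy z hz
  by_contra h
  refine hstab ((hasOrderProperty_two_iff A).2 ⟨0, y - x, z, x, ?_, ?_, ?_, ?_⟩)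
  · simpa using hz
  · simpa using hx
  · rwa [sub_add_eq_add_sub]
  · simpa using hy

theorem two_stable_closed {G : Type*} [AddCommGroup G] (A : Set G)
    (hstab : ¬ HasOrderProperty A 2) (hne : A.Nonempty) :
    ∀ x ∈ A, ∀ y ∈ A, ∀ z ∈ A, y + z - x ∈ A :=
  two_stable_closed_general A hstab
end

section
/- If A is a Sidon set in an Abelian group G, then A is 3-stable (does not have the 3-order property). -/
/-- `A` is a Sidon set if `x - y = z - w` with all four in `A` forces `x = y` or `x = z`. -/
def IsSidon {G : Type*} [AddCommGroup G] (A : Set G) : Prop :=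
  ∀ x ∈ A, ∀ y ∈ A, ∀ z ∈ A, ∀ w ∈ A, x - y = z - w → x = y ∨ x = z

theorem IsSidon.eq_or_eq_of_add_mem {G : Type*} [AddCommGroup G] {A : Set G} (hA : IsSidon A)
    {a a' b b' : G} (h₁ : a' + b' ∈ A) (h₂ : a + b' ∈ A) (h₃ : a' + b ∈ A) (h₄ : a + b ∈ A) :
    a' = a ∨ b' = b :=
  (hA _ h₁ _ h₂ _ h₃ _ h₄ (by abel)).imp add_right_cancel add_left_cancel

theorem sidon_three_stable {G : Type*} [AddCommGroup G] (A : Set G)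
    (hA : IsSidon A) : ¬ HasOrderProperty A 3 := by
  rintro ⟨a, b, h⟩
  have mem : ∀ i j : Fin 3, i ≤ j → a i + b j ∈ A := fun i j hij => (h i j).2 hij
  rcases hA.eq_or_eq_of_add_mem (mem 1 2 (by decide)) (mem 0 2 (by decide))
    (mem 1 1 le_rfl) (mem 0 1 (by decide)) with ha | hb
  · exact absurd ((h 1 0).1 (ha ▸ mem 0 0 le_rfl)) (by decide)
  · exact absurd ((h 2 1).1 (hb ▸ mem 2 2 le_rfl)) (by decide)
end

section
/- If H is a subgroup of an Abelian group G and S is a union of s cosets of H, then S is (s+1)-stable, i.e., S does not have the (s+1)-order property. -/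
namespace HasOrderProperty

variable {G G' : Type*} [AddCommGroup G] [AddCommGroup G'] {k : ℕ}

theorem of_preimage (f : G →+ G') {B : Set G'} (h : HasOrderProperty (f ⁻¹' B) k) :
    HasOrderProperty B k := by
  obtain ⟨a, b, hab⟩ := h
  exact ⟨f ∘ a, f ∘ b, fun i j => by simpa using hab i j⟩

theorem le_ncard {A : Set G} (h : HasOrderProperty A k) (hA : A.Finite) : k ≤ A.ncard := by
  obtain ⟨a, b, hab⟩ := h
  obtain _ | k := k
  · exact Nat.zero_le _
  have hb : Function.Injective b := by
    intro i j hij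
    by_contra hne
    rcases lt_or_gt_of_ne hne with hlt | hlt
    · exact hlt.not_ge ((hab j i).1 (hij ▸ (hab j j).2 le_rfl))
    · exact hlt.not_ge ((hab i j).1 (hij ▸ (hab i i).2 le_rfl))
  calc k + 1 = (Set.univ : Set (Fin (k + 1))).ncard := by simp
    _ ≤ A.ncard :=
      Set.ncard_le_ncard_of_injOn (a 0 + b ·) (fun j _ => (hab 0 j).2 (Fin.zero_le j))
        ((add_right_injective (a 0)).comp hb).injOn hA

end HasOrderProperty

theorem AddSubgroup.iUnion_image_add_left_eq_preimage_mk {G : Type*} [AddCommGroup G]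
    (H : AddSubgroup G) (T : Set G) :
    ⋃ g ∈ T, (fun h => g + h) '' (H : Set G) =
      QuotientAddGroup.mk' H ⁻¹' (QuotientAddGroup.mk '' T) := by
  ext x
  simp only [Set.mem_iUnion, Set.mem_image, Set.mem_preimage, QuotientAddGroup.mk'_apply,
    QuotientAddGroup.eq, SetLike.mem_coe, exists_prop]
  constructor
  · rintro ⟨g, hg, h, hh, rfl⟩
    exact ⟨g, hg, by simpa using hh⟩
  · rintro ⟨g, hg, hgx⟩
    exact ⟨g, hg, -g + x, hgx, add_neg_cancel_left g x⟩

theorem union_cosets_stable {G : Type*} [AddCommGroup G] (H : AddSubgroup G)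
    (s : ℕ) (T : Finset G) (hT : T.card = s) (S : Set G)
    (hS : S = ⋃ g ∈ T, (fun h => g + h) '' (H : Set G)) :
    ¬ HasOrderProperty S (s + 1) := by
  have hS' : S = QuotientAddGroup.mk' H ⁻¹' (QuotientAddGroup.mk '' T) := by
    rw [hS, ← H.iUnion_image_add_left_eq_preimage_mk]
    simp only [Finset.mem_coe]
  rw [hS']
  intro h
  have hle := (h.of_preimage _).le_ncard (T.finite_toSet.image _)
  have himage : (QuotientAddGroup.mk '' (T : Set G) : Set (G ⧸ H)).ncard ≤ s :=
    calc _ ≤ (T : Set G).ncard := Set.ncard_image_le T.finite_toSet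
      _ = s := by rw [Set.ncard_coe_finset, hT]
  omega
end

section
/- Let A_1, ..., A_m be subsets of an Abelian group G and let N = r(k_1+1, ..., k_m+1) be the multicolour Ramsey number. If the union A_1 ∪ ... ∪ A_m has the (N+1)-order property, then there exists some q with 1 ≤ q ≤ m such that A_q has the k_q-order property. -/
/-- `N` is Ramsey for sizes `k : Fin m → ℕ`: every `m`-colouring of the edges of the
complete graph on `N` vertices has, for some colour `q`, a complete subgraph on
`k q` vertices all of whose edges have colour `q`. -/
def IsRamseyNumber {m : ℕ} (k : Fin m → ℕ) (N : ℕ) : Prop :=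
  ∀ c : Fin N → Fin N → Fin m, ∃ q : Fin m, ∃ f : Fin (k q) → Fin N,
    StrictMono f ∧ ∀ i j : Fin (k q), i < j → c (f i) (f j) = q

/-- The multicolour Ramsey number `r(k₁, …, k_m)`. -/
noncomputable def ramseyNumber {m : ℕ} (k : Fin m → ℕ) : ℕ :=
  sInf {N | IsRamseyNumber k N}

open Finset Function

section Ramsey

variable {m : ℕ} {α : Type*} [LinearOrder α]

def IsMonochromatic (c : α → α → Fin m) (q : Fin m) (s : Finset α) : Prop :=
  ∀ x ∈ s, ∀ y ∈ s, x < y → c x y = q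

theorem IsMonochromatic.insert [DecidableEq α] {c : α → α → Fin m} {q : Fin m} {s : Finset α}
    {v : α} (hs : IsMonochromatic c q s) (hv : ∀ y ∈ s, v < y ∧ c v y = q) :
    IsMonochromatic c q (insert v s) := by
  intro x hx y hy hxy
  rcases mem_insert.mp hx with hxv | hx <;> rcases mem_insert.mp hy with hyv | hy
  · exact absurd hxy (hxv.trans hyv.symm ▸ lt_irrefl x)
  · exact hxv ▸ (hv y hy).2
  · exact absurd (hyv ▸ hxy) (hv x hx).1.asymm
  · exact hs x hx y hy hxy

/-- Ramsey property relative to an arbitrary vertex set `V` of size at least `N` in a linear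
order; unlike `IsRamseyNumber`, it passes to a neighbourhood without reindexing vertices. -/
def IsRamseyBound (k : Fin m → ℕ) (N : ℕ) : Prop :=
  ∀ {α : Type} [LinearOrder α] (c : α → α → Fin m) (V : Finset α), N ≤ #V →
    ∃ q, ∃ s ⊆ V, #s = k q ∧ IsMonochromatic c q s

theorem isRamseyBound_zero {k : Fin m → ℕ} {q : Fin m} (hq : k q = 0) : IsRamseyBound k 0 :=
  fun _ _ _ => ⟨q, ∅, empty_subset _, hq.symm, by simp [IsMonochromatic]⟩

theorem exists_le_card_filter_eq [NeZero m] {ι : Type*} (g : ι → Fin m) (W : Finset ι)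
    (n : Fin m → ℕ) (hW : ∑ q, n q ≤ #W) : ∃ q, n q ≤ #(W.filter (g · = q)) := by
  by_contra! hlt
  have hfib : #W = ∑ q, #(W.filter (g · = q)) :=
    card_eq_sum_card_fiberwise fun x _ => mem_univ (g x)
  have : ∑ q, #(W.filter (g · = q)) < ∑ q, n q :=
    sum_lt_sum_of_nonempty univ_nonempty fun q _ => hlt q
  omega

theorem IsRamseyBound.of_update [NeZero m] {k : Fin m → ℕ} (hk : ∀ q, 0 < k q)
    {N : Fin m → ℕ} (hN : ∀ q, IsRamseyBound (update k q (k q - 1)) (N q)) :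
    IsRamseyBound k (∑ q, N q + 1) := by
  intro α _ c V hV
  classical
  have hne : V.Nonempty := card_pos.mp (by omega)
  set v := V.min' hne
  obtain ⟨q, hq⟩ := exists_le_card_filter_eq (c v) (V.erase v) N
    (by rw [card_erase_of_mem (V.min'_mem hne)]; omega)
  obtain ⟨q', s, hsW, hs, hmono⟩ := hN q c _ hq
  have hsV : s ⊆ V.erase v := hsW.trans (filter_subset _ _)
  by_cases hqq : q' = q
  · subst hqq
    have hv : ∀ y ∈ s, v < y ∧ c v y = q' := fun y hy =>
      ⟨V.min'_lt_of_mem_erase_min' hne (hsV hy), (mem_filter.mp (hsW hy)).2⟩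
    refine ⟨q', insert v s, insert_subset (V.min'_mem hne) (hsV.trans (erase_subset _ _)),
      ?_, hmono.insert hv⟩
    rw [card_insert_of_notMem fun hvs => lt_irrefl v (hv v hvs).1, hs, update_self]
    have := hk q'
    omega
  · exact ⟨q', s, hsV.trans (erase_subset _ _), by rwa [update_of_ne hqq] at hs, hmono⟩

theorem sum_update_pred_lt {k : Fin m → ℕ} {q : Fin m} (hq : 0 < k q) :
    ∑ i, update k q (k q - 1) i < ∑ i, k i := by
  rw [sum_update_of_mem (mem_univ q), sum_eq_sum_sdiff_singleton_add (mem_univ q) k]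
  omega

theorem exists_isRamseyBound [NeZero m] (k : Fin m → ℕ) : ∃ N, IsRamseyBound k N := by
  by_cases hpos : ∀ q, 0 < k q
  · choose N hN using fun q => exists_isRamseyBound (update k q (k q - 1))
    exact ⟨_, IsRamseyBound.of_update hpos hN⟩
  · obtain ⟨q, hq⟩ := not_forall.mp hpos
    exact ⟨0, isRamseyBound_zero (Nat.eq_zero_of_not_pos hq)⟩
termination_by ∑ q, k q
decreasing_by all_goals exact sum_update_pred_lt (hpos _)

theorem IsRamseyBound.isRamseyNumber {k : Fin m → ℕ} {N : ℕ} (h : IsRamseyBound k N) :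
    IsRamseyNumber k N := by
  intro c
  obtain ⟨q, s, -, hs, hmono⟩ := h c univ (by simp)
  exact ⟨q, s.orderEmbOfFin hs, (s.orderEmbOfFin hs).strictMono, fun i j hij =>
    hmono _ (s.orderEmbOfFin_mem hs i) _ (s.orderEmbOfFin_mem hs j)
      ((s.orderEmbOfFin hs).strictMono hij)⟩

theorem isRamseyNumber_ramseyNumber [NeZero m] (k : Fin m → ℕ) :
    IsRamseyNumber k (ramseyNumber k) :=
  Nat.sInf_mem <| (exists_isRamseyBound k).imp fun _ => IsRamseyBound.isRamseyNumber

end Ramsey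

theorem HasOrderProperty.of_strictMono {G : Type*} [AddCommGroup G] {A B : Set G} (hAB : A ⊆ B)
    {N n : ℕ} {a b : Fin (N + 1) → G} (hab : ∀ i j, a i + b j ∈ B ↔ i ≤ j)
    {f : Fin (n + 1) → Fin N} (hf : StrictMono f)
    (hA : ∀ i j, i < j → a (f i).succ + b (f j).castSucc ∈ A) : HasOrderProperty A n := by
  refine ⟨fun i => a (f i.castSucc).succ, fun j => b (f j.succ).castSucc, fun i j => ⟨?_, ?_⟩⟩
  · intro hmem
    have := Fin.succ_le_castSucc_iff.mp ((hab _ _).mp (hAB hmem))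
    exact Fin.castSucc_lt_succ_iff.mp (hf.lt_iff_lt.mp this)
  · exact fun hij => hA _ _ (Fin.castSucc_lt_succ_iff.mpr hij)

theorem multicolour_order_property {G : Type*} [AddCommGroup G] {m : ℕ}
    (A : Fin m → Set G) (k : Fin m → ℕ) (N : ℕ)
    (hN : N = ramseyNumber (fun q => k q + 1))
    (h : HasOrderProperty (⋃ q, A q) (N + 1)) :
    ∃ q : Fin m, HasOrderProperty (A q) (k q) := by
  obtain ⟨a, b, hab⟩ := h
  have : NeZero m := ⟨by rintro rfl; simpa using (hab 0 0).mpr le_rfl⟩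
  classical
  let c : Fin N → Fin N → Fin m := fun i j =>
    if h : ∃ q, a i.succ + b j.castSucc ∈ A q then h.choose else 0
  obtain ⟨q, f, hf, hcol⟩ := (hN ▸ isRamseyNumber_ramseyNumber (fun q => k q + 1)) c
  refine ⟨q, HasOrderProperty.of_strictMono (Set.subset_iUnion A q) hab hf fun i j hij => ?_⟩
  have hex : ∃ q, a (f i).succ + b (f j).castSucc ∈ A q :=
    Set.mem_iUnion.mp ((hab _ _).mpr (Fin.succ_le_castSucc_iff.mpr (hf hij)))
  have hq : c (f i) (f j) = q := hcol i j hij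
  simp only [c, dif_pos hex] at hq
  exact hq ▸ hex.choose_spec
end

section
/- Let M be the k × k real tridiagonal matrix with M_{11} = 1, M_{ii} = 2 for i ≥ 2, M_{i,i+1} = M_{i+1,i} = -1, and 0 elsewhere. Then the eigenvalues of M are exactly 4 cos²(πj/(2k+1)) for j = 1, ..., k. -/
/-!
The vector `v i = cos ((i + 1/2) θ)` satisfies the three-term recurrence
`v (i - 1) + v (i + 1) = 2 cos θ · v i`, and it extends evenly across `i = -1/2`, which absorbs the
corner entry `1` of `M`. If moreover `cos ((k + 1/2) θ) = 0`, it is an eigenvector of `M` for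
`2 - 2 cos θ`. Taking `θ = π - 2 π (j + 1) / (2k + 1)` gives the eigenvalue
`4 cos² (π (j + 1) / (2k + 1))` for each `j < k`; these `k` values are distinct, and a `k × k`
matrix has at most `k` eigenvalues, so there are no others.
-/

open Real Matrix Finset

namespace Matrix

variable {K n : Type*} [Field K] [Fintype n] [DecidableEq n]

theorem isRoot_charpoly_of_mulVec_eq_smul {A : Matrix n n K} {μ : K} {v : n → K}
    (hv : v ≠ 0) (h : A *ᵥ v = μ • v) : A.charpoly.IsRoot μ := by
  rw [Polynomial.IsRoot, eval_charpoly, ← exists_mulVec_eq_zero_iff]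
  exact ⟨v, hv, by simp [sub_mulVec, h]⟩

theorem setOf_eigenvalue_eq_range (A : Matrix n n K) {f : n → K} (hf : Function.Injective f)
    (hev : ∀ j, ∃ v ≠ 0, A *ᵥ v = f j • v) :
    {μ | ∃ v ≠ 0, A *ᵥ v = μ • v} = Set.range f := by
  classical
  have mem_roots {μ : K} (hμ : ∃ v ≠ 0, A *ᵥ v = μ • v) : μ ∈ A.charpoly.roots.toFinset := by
    obtain ⟨v, hv, h⟩ := hμ
    rw [Multiset.mem_toFinset, Polynomial.mem_roots A.charpoly_monic.ne_zero]
    exact isRoot_charpoly_of_mulVec_eq_smul hv h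
  have image_eq_roots : image f univ = A.charpoly.roots.toFinset := by
    refine eq_of_subset_of_card_le (fun μ hμ => ?_) ?_
    · obtain ⟨j, -, rfl⟩ := mem_image.mp hμ
      exact mem_roots (hev j)
    · rw [card_image_of_injective _ hf, card_univ, ← A.charpoly_natDegree_eq_dim]
      exact (Multiset.toFinset_card_le _).trans A.charpoly.card_roots'
  refine subset_antisymm (fun μ hμ => ?_) (Set.range_subset_iff.mpr hev)
  simpa [← image_eq_roots] using mem_roots hμ

end Matrix

def halfGraphGram (k : ℕ) : Matrix (Fin k) (Fin k) ℝ :=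
  of fun i j => if i = j then (if (i : ℕ) = 0 then 1 else 2)
    else if (i : ℕ) + 1 = (j : ℕ) ∨ (j : ℕ) + 1 = (i : ℕ) then -1 else 0

theorem halfGraphGram_mulVec {k : ℕ} (w : ℤ → ℝ) (h_left : w (-1) = w 0) (h_right : w k = 0)
    (i : Fin k) :
    (halfGraphGram k *ᵥ fun j => w (j : ℕ)) i =
      2 * w (i : ℕ) - w ((i : ℕ) - 1) - w ((i : ℕ) + 1) := by
  obtain ⟨i, hi⟩ := i
  have entry (n : ℕ) : (if i = n then (if i = 0 then 1 else 2)
      else if i + 1 = n ∨ n + 1 = i then -1 else 0) * w n =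
      (if n = i then (if i = 0 then 1 else 2) * w i else 0)
        - (if n = i + 1 then w n else 0) - (if n + 1 = i then w n else 0) := by
    split_ifs <;> first | omega | (subst_vars; ring)
  have h_next : (if i + 1 < k then w ((i + 1 : ℕ) : ℤ) else 0) = w ((i + 1 : ℕ) : ℤ) := by
    split_ifs with h
    · rfl
    · rw [show i + 1 = k by omega, h_right]
  simp only [mulVec, dotProduct, halfGraphGram, of_apply, Fin.ext_iff]
  rw [Fin.sum_univ_eq_sum_range (fun n => (if i = n then (if i = 0 then 1 else 2)
      else if i + 1 = n ∨ n + 1 = i then -1 else 0) * w n)]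
  simp only [entry, sum_sub_distrib, sum_ite_eq', mem_range, hi, if_true, h_next]
  rcases i with _ | i
  · simp [h_left, two_mul]
  · simp [show i < k by omega, two_mul, sub_sub, add_comm]

theorem halfGraphGram_mulVec_cos {k : ℕ} {θ : ℝ} (hθ : cos ((k + 1 / 2) * θ) = 0) :
    halfGraphGram k *ᵥ (fun i : Fin k => cos (((i : ℕ) + 1 / 2) * θ)) =
      (2 - 2 * cos θ) • fun i : Fin k => cos (((i : ℕ) + 1 / 2) * θ) := by
  ext i
  have h := halfGraphGram_mulVec (fun n : ℤ => cos ((n + 1 / 2) * θ))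
    (by rw [← cos_neg]; push_cast; ring_nf) (by exact_mod_cast hθ) i
  push_cast at h
  rw [h, Pi.smul_apply, smul_eq_mul, sub_sub, add_comm (cos _), cos_add_cos]
  ring_nf

theorem pi_mul_succ_div_mem_Ioo {k : ℕ} (j : Fin k) :
    π * ((j : ℕ) + 1) / (2 * k + 1) ∈ Set.Ioo 0 (π / 2) := by
  have hj : ((j : ℕ) : ℝ) + 1 ≤ k := by exact_mod_cast j.isLt
  constructor
  · positivity
  · rw [div_lt_iff₀ (by positivity)]
    nlinarith [pi_pos]

theorem strictAnti_four_mul_cos_sq (k : ℕ) :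
    StrictAnti fun j : Fin k => 4 * cos (π * ((j : ℕ) + 1) / (2 * k + 1)) ^ 2 := by
  intro a b hab
  have ha := pi_mul_succ_div_mem_Ioo a
  have hb := pi_mul_succ_div_mem_Ioo b
  have hlt : π * ((a : ℕ) + 1) / (2 * k + 1) < π * ((b : ℕ) + 1) / (2 * k + 1) := by
    gcongr
    exact_mod_cast hab
  have hcos := strictAntiOn_cos ⟨ha.1.le, by linarith [ha.2, pi_pos]⟩
    ⟨hb.1.le, by linarith [hb.2, pi_pos]⟩ hlt
  have := cos_nonneg_of_mem_Icc ⟨by linarith [hb.1, pi_pos], hb.2.le⟩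
  dsimp only
  gcongr

theorem exists_halfGraphGram_eigenvector {k : ℕ} (j : Fin k) :
    ∃ v ≠ 0, halfGraphGram k *ᵥ v = (4 * cos (π * ((j : ℕ) + 1) / (2 * k + 1)) ^ 2) • v := by
  set α := π * ((j : ℕ) + 1) / (2 * k + 1) with hα
  have hαmem := pi_mul_succ_div_mem_Ioo j
  have hθ : cos ((k + 1 / 2) * (π - 2 * α)) = 0 := by
    rw [cos_eq_zero_iff]
    refine ⟨(k : ℤ) - 1 - (j : ℕ), ?_⟩
    rw [hα]
    field_simp
    push_cast
    ring
  refine ⟨fun i : Fin k => cos (((i : ℕ) + 1 / 2) * (π - 2 * α)), fun h => ?_,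
    (halfGraphGram_mulVec_cos hθ).trans ?_⟩
  · have h0 := congrFun h ⟨0, j.pos⟩
    simp only [Pi.zero_apply] at h0
    rw [show ((0 : ℕ) + 1 / 2 : ℝ) * (π - 2 * α) = π / 2 - α by push_cast; ring,
      cos_pi_div_two_sub] at h0
    exact (sin_pos_of_pos_of_lt_pi hαmem.1 (by linarith [hαmem.2, pi_pos])).ne' h0
  · rw [cos_pi_sub, cos_sq]
    ring_nf

theorem eigenvalues_of_halfgraph_gram_general (k : ℕ)
    (M : Matrix (Fin k) (Fin k) ℝ)
    (hM : ∀ i j : Fin k, M i j =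
      if i = j then (if (i : ℕ) = 0 then 1 else 2)
      else if (i : ℕ) + 1 = (j : ℕ) ∨ (j : ℕ) + 1 = (i : ℕ) then -1 else 0) :
    {μ : ℝ | ∃ v : Fin k → ℝ, v ≠ 0 ∧ M.mulVec v = μ • v} =
      {μ : ℝ | ∃ j : Fin k, μ = 4 * Real.cos (π * ((j : ℕ) + 1) / (2 * k + 1)) ^ 2} := by
  obtain rfl : M = halfGraphGram k := Matrix.ext hM
  rw [setOf_eigenvalue_eq_range _ (strictAnti_four_mul_cos_sq k).injective
    exists_halfGraphGram_eigenvector]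
  ext μ
  simp [eq_comm]

theorem eigenvalues_of_halfgraph_gram (k : ℕ) (hk : 1 ≤ k)
    (M : Matrix (Fin k) (Fin k) ℝ)
    (hM : ∀ i j : Fin k, M i j =
      if i = j then (if (i : ℕ) = 0 then 1 else 2)
      else if (i : ℕ) + 1 = (j : ℕ) ∨ (j : ℕ) + 1 = (i : ℕ) then -1 else 0) :
    {μ : ℝ | ∃ v : Fin k → ℝ, v ≠ 0 ∧ M.mulVec v = μ • v} =
      {μ : ℝ | ∃ j : Fin k, μ = 4 * Real.cos (π * ((j : ℕ) + 1) / (2 * k + 1)) ^ 2} :=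
  eigenvalues_of_halfgraph_gram_general k M hM
end

section
/- For every k ≥ 1, ∑_{j=1}^{k} 1/(2 cos(jπ/(2k+1))) ≥ (k/π)(log k + log(16 e^γ / π) - 1/k), where γ is the Euler–Mascheroni constant. In particular the sum is at least (k/π) log(k/c_0) - 1/π with c_0 = 2^{-4} e^{-γ} π. -/
/-!
Reflecting `j ↦ k - 1 - j` turns the sum into `∑_{j<k} 1 / (2 sin θⱼ)` over the nodes
`θⱼ = a + j h`, `h = π / (2k + 1)`, `a = h / 2`, whose next node `θₖ` is `π / 2`.
Split `1 / (2 sin θ) = 1 / (2θ) + g θ`. The first part sums to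
`h⁻¹ ∑_{j<k} 1 / (2j + 1) = h⁻¹ (H_{2k} - H_k / 2)`, controlled by
`log n + γ ≤ H_n ≤ log (n + 1) + γ`. The remainder `g` is increasing on `(0, π)` with
antiderivative `F x = ½ log (tan (x / 2) / x)`, so by the mean value theorem
`h ∑ g θⱼ ≥ F (π / 2) - F a + h g a - h g (π / 2)`, where `F (π / 2) = ½ log (2 / π)` and
`F a ≤ -½ log 2 + a² / 8` because `tan (x / 2) / x → 1 / 2`. These contributions add up to the
constant `log (16 e^γ / π)`; the remaining error terms fit in the slack `1 / k` for every `k ≥ 1`.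
-/

open Real Finset

theorem sub_le_mul_sub_of_hasDerivAt_of_monotoneOn {F g : ℝ → ℝ} {x y : ℝ} (hxy : x ≤ y)
    (hF : ∀ t ∈ Set.Icc x y, HasDerivAt F (g t) t) (hg : MonotoneOn g (Set.Icc x y)) :
    F y - F x ≤ g y * (y - x) := by
  rcases hxy.eq_or_lt with rfl | hlt
  · simp
  obtain ⟨c, hc, hslope⟩ := exists_hasDerivAt_eq_slope F g hlt
    (fun t ht ↦ (hF t ht).continuousAt.continuousWithinAt)
    (fun t ht ↦ hF t (Set.Ioo_subset_Icc_self ht))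
  have hgc : g c ≤ g y := hg (Set.Ioo_subset_Icc_self hc) ⟨hlt.le, le_rfl⟩ hc.2.le
  rwa [hslope, div_le_iff₀ (sub_pos.2 hlt)] at hgc

theorem sub_le_mul_sum_of_hasDerivAt_of_monotoneOn {F g : ℝ → ℝ} {a h : ℝ} (hh : 0 ≤ h)
    (n : ℕ)    (hF : ∀ t ∈ Set.Icc a (a + n * h), HasDerivAt F (g t) t)
    (hg : MonotoneOn g (Set.Icc a (a + n * h))) :
    F (a + n * h) - F a ≤ h * ∑ j ∈ range n, g (a + (j + 1) * h) := by
  induction n with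
  | zero => simp
  | succ n ih =>
    rw [Nat.cast_succ] at hF hg ⊢
    have hle : a + n * h ≤ a + (n + 1) * h := by linarith
    have hsub : Set.Icc a (a + n * h) ⊆ Set.Icc a (a + (n + 1) * h) :=
      Set.Icc_subset_Icc_right hle
    have hstep : Set.Icc (a + n * h) (a + (n + 1) * h) ⊆ Set.Icc a (a + (n + 1) * h) :=
      Set.Icc_subset_Icc_left (by nlinarith [n.cast_nonneg (α := ℝ)])
    have hlast := sub_le_mul_sub_of_hasDerivAt_of_monotoneOn hle
      (fun t ht ↦ hF t (hstep ht)) (hg.mono hstep)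
    have hfirst := ih (fun t ht ↦ hF t (hsub ht)) (hg.mono hsub)
    rw [sum_range_succ, mul_add]
    linear_combination hfirst + hlast

noncomputable def cscRemainder (x : ℝ) : ℝ := 1 / (2 * sin x) - 1 / (2 * x)

noncomputable def cscRemainderAntideriv (x : ℝ) : ℝ :=
  (log (sin (x / 2)) - log (cos (x / 2)) - log x) / 2

theorem hasDerivAt_cscRemainderAntideriv {x : ℝ} (h0 : 0 < x) (h1 : x < π) :
    HasDerivAt cscRemainderAntideriv (cscRemainder x) x := by
  have hs : 0 < sin (x / 2) := sin_pos_of_pos_of_lt_pi (by linarith) (by linarith)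
  have hc : 0 < cos (x / 2) := cos_pos_of_mem_Ioo ⟨by linarith, by linarith⟩
  have hhalf : HasDerivAt (fun t : ℝ ↦ t / 2) (1 / 2) x := by
    simpa using (hasDerivAt_id x).div_const 2
  have h : HasDerivAt cscRemainderAntideriv _ x :=
    ((((hasDerivAt_sin _).comp x hhalf).log hs.ne').sub
      (((hasDerivAt_cos _).comp x hhalf).log hc.ne') |>.sub (hasDerivAt_log h0.ne')).div_const 2
  refine h.congr_deriv ?_
  have hsin : sin x = 2 * sin (x / 2) * cos (x / 2) := by
    rw [← sin_two_mul, mul_div_cancel₀ x two_ne_zero]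
  simp only [Function.comp_apply]
  rw [cscRemainder, hsin]
  field_simp
  linear_combination x * sin_sq_add_cos_sq (x / 2)

theorem hasDerivAt_cscRemainder {x : ℝ} (h0 : 0 < x) (h1 : x < π) :
    HasDerivAt cscRemainder (1 / (2 * x ^ 2) - cos x / (2 * sin x ^ 2)) x := by
  have hs : sin x ≠ 0 := (sin_pos_of_pos_of_lt_pi h0 h1).ne'
  have h : HasDerivAt cscRemainder _ x :=
    (((hasDerivAt_sin x).const_mul 2).fun_inv (by positivity)).fun_sub
      (((hasDerivAt_id' x).const_mul 2).fun_inv (by positivity)) |>.congr_of_eventuallyEq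
      (.of_forall fun t ↦ by simp [cscRemainder])
  refine h.congr_deriv ?_
  field_simp
  ring

theorem sq_mul_cos_le_sin_sq {x : ℝ} (h0 : 0 ≤ x) (h1 : x < π) :
    x ^ 2 * cos x ≤ sin x ^ 2 := by
  set u := x / 2
  have hx : x = 2 * u := by ring
  have hc : 0 < cos u := cos_pos_of_mem_Ioo ⟨by linarith, by linarith⟩
  have htan : u * cos u ≤ sin u := by
    have := le_tan (x := u) (by linarith) (by linarith)
    rwa [tan_eq_sin_div_cos, le_div_iff₀ hc] at this
  have hsin : x * cos u ^ 2 ≤ sin x := by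
    rw [hx, sin_two_mul]; nlinarith
  have hcos : cos x ≤ cos u ^ 4 := by
    rw [hx, cos_two_mul]; nlinarith [sq_nonneg (cos u ^ 2 - 1)]
  calc x ^ 2 * cos x ≤ x ^ 2 * cos u ^ 4 := by gcongr
    _ = (x * cos u ^ 2) ^ 2 := by ring
    _ ≤ sin x ^ 2 := by gcongr

theorem cscRemainder_monotoneOn : MonotoneOn cscRemainder (Set.Ioo 0 π) := by
  have hderiv_nonneg : ∀ x ∈ Set.Ioo 0 π, 0 ≤ 1 / (2 * x ^ 2) - cos x / (2 * sin x ^ 2) := by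
    rintro x ⟨hx0, hxπ⟩
    have hs : 0 < sin x := sin_pos_of_pos_of_lt_pi hx0 hxπ
    rw [sub_nonneg, div_le_div_iff₀ (by positivity) (by positivity)]
    linarith [sq_mul_cos_le_sin_sq hx0.le hxπ]
  refine monotoneOn_of_hasDerivWithinAt_nonneg (convex_Ioo 0 π)
    (fun x hx ↦ (hasDerivAt_cscRemainder hx.1 hx.2).continuousAt.continuousWithinAt)
    (f' := fun x ↦ 1 / (2 * x ^ 2) - cos x / (2 * sin x ^ 2)) ?_ ?_ <;> rw [interior_Ioo]
  · exact fun x hx ↦ (hasDerivAt_cscRemainder hx.1 hx.2).hasDerivWithinAt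
  · exact hderiv_nonneg

theorem cscRemainder_nonneg {x : ℝ} (h0 : 0 < x) (h1 : x < π) : 0 ≤ cscRemainder x := by
  have hs : 0 < sin x := sin_pos_of_pos_of_lt_pi h0 h1
  rw [cscRemainder, sub_nonneg]
  gcongr
  exact sin_le h0.le

theorem cscRemainder_pi_div_two : cscRemainder (π / 2) = 1 / 2 - 1 / π := by
  rw [cscRemainder, sin_pi_div_two]
  field_simp

theorem cscRemainderAntideriv_pi_div_two :
    cscRemainderAntideriv (π / 2) = (log 2 - log π) / 2 := by
  rw [cscRemainderAntideriv, show π / 2 / 2 = π / 4 by ring, sin_pi_div_four, cos_pi_div_four,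
    log_div pi_ne_zero two_ne_zero]
  ring

theorem neg_log_cos_le_sq {t : ℝ} (ht : |t| ≤ 1) : -log (cos t) ≤ t ^ 2 := by
  have ht2 : t ^ 2 ≤ 1 := by nlinarith [sq_abs t, abs_nonneg t]
  have hcos : 1 - t ^ 2 / 2 ≤ cos t := one_sub_sq_div_two_le_cos
  have hpos : 0 < cos t := by linarith
  have hinv : (cos t)⁻¹ ≤ 1 + t ^ 2 := by
    rw [inv_le_iff_one_le_mul₀ hpos]; nlinarith
  have := log_le_sub_one_of_pos (inv_pos.2 hpos)
  rw [log_inv] at this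
  linarith

theorem cscRemainderAntideriv_le {x : ℝ} (h0 : 0 < x) (h1 : x ≤ 2) :
    cscRemainderAntideriv x ≤ (x ^ 2 / 4 - log 2) / 2 := by
  have hs : 0 < sin (x / 2) := sin_pos_of_pos_of_lt_pi (by linarith) (by linarith [pi_gt_three])
  have hsin : log (sin (x / 2)) ≤ log x - log 2 := by
    rw [← log_div h0.ne' two_ne_zero]; exact log_le_log hs (sin_le (by linarith))
  have hcos := neg_log_cos_le_sq (t := x / 2) (by rw [abs_le]; constructor <;> linarith)
  rw [cscRemainderAntideriv]
  linarith

theorem le_mul_sum_inv_two_mul_sin {a h : ℝ} (ha : 0 < a) (hh : 0 ≤ h) (n : ℕ)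
    (hπ : a + n * h < π) :
    cscRemainderAntideriv (a + n * h) - cscRemainderAntideriv a + h * cscRemainder a -
        h * cscRemainder (a + n * h) + h * ∑ j ∈ range n, 1 / (2 * (a + j * h)) ≤
      h * ∑ j ∈ range n, 1 / (2 * sin (a + j * h)) := by
  have hIcc : Set.Icc a (a + n * h) ⊆ Set.Ioo 0 π := Set.Icc_subset_Ioo ha hπ
  have htel := sub_le_mul_sum_of_hasDerivAt_of_monotoneOn hh n
    (fun t ht ↦ hasDerivAt_cscRemainderAntideriv (hIcc ht).1 (hIcc ht).2)
    (cscRemainder_monotoneOn.mono hIcc)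
  have hshift : ∑ j ∈ range n, cscRemainder (a + (j + 1) * h) + cscRemainder a =
      ∑ j ∈ range n, cscRemainder (a + j * h) + cscRemainder (a + n * h) := by
    rw [← sum_range_succ, sum_range_succ' (fun j : ℕ ↦ cscRemainder (a + j * h))]
    simp
  have hsplit : ∑ j ∈ range n, 1 / (2 * sin (a + j * h)) =
      ∑ j ∈ range n, 1 / (2 * (a + j * h)) + ∑ j ∈ range n, cscRemainder (a + j * h) := by
    rw [← sum_add_distrib]
    exact sum_congr rfl fun j _ ↦ by rw [cscRemainder]; ring
  rw [hsplit]
  linear_combination htel + h * hshift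

theorem sum_inv_two_mul_cos_eq_sum_inv_two_mul_sin (k : ℕ) :
    ∑ j ∈ range k, 1 / (2 * cos (((j : ℝ) + 1) * π / (2 * k + 1))) =
      ∑ j ∈ range k, 1 / (2 * sin (π / (2 * (2 * k + 1)) + j * (π / (2 * k + 1)))) := by
  rw [← sum_range_reflect]
  refine sum_congr rfl fun j hj ↦ ?_
  have hjk : j + 1 ≤ k := mem_range.1 hj
  have hcast : ((k - 1 - j : ℕ) : ℝ) = k - (j + 1) := by
    rw [show k - 1 - j = k - (j + 1) by omega, Nat.cast_sub hjk]; push_cast; ring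
  rw [hcast, ← sin_pi_div_two_sub]
  congr 3
  field_simp
  ring

theorem sum_range_inv_two_mul_add_one (k : ℕ) :
    ∑ j ∈ range k, 1 / (2 * (j : ℝ) + 1) = harmonic (2 * k) - harmonic k / 2 := by
  induction k with
  | zero => simp
  | succ n ih =>
    rw [sum_range_succ, ih, show 2 * (n + 1) = 2 * n + 1 + 1 by ring, harmonic_succ,
      harmonic_succ, harmonic_succ]
    push_cast
    field_simp
    ring

theorem log_add_eulerMascheroniConstant_le_harmonic {n : ℕ} (hn : n ≠ 0) :
    log n + eulerMascheroniConstant ≤ harmonic n := by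
  have h := eulerMascheroniConstant_lt_eulerMascheroniSeq' n
  rw [eulerMascheroniSeq', if_neg hn] at h
  linarith

theorem harmonic_le_log_add_one_add_eulerMascheroniConstant (n : ℕ) :
    harmonic n ≤ log (n + 1) + eulerMascheroniConstant := by
  have h := eulerMascheroniSeq_lt_eulerMascheroniConstant n
  rw [eulerMascheroniSeq] at h
  linarith

theorem sum_range_inv_two_mul_add_one_ge_log {k : ℕ} (hk : k ≠ 0) :
    log 2 + log k + eulerMascheroniConstant / 2 - log (k + 1) / 2 ≤
      ∑ j ∈ range k, 1 / (2 * (j : ℝ) + 1) := by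
  have h2k := log_add_eulerMascheroniConstant_le_harmonic (n := 2 * k) (by omega)
  have hk := harmonic_le_log_add_one_add_eulerMascheroniConstant k
  rw [Nat.cast_mul, Nat.cast_ofNat, log_mul two_ne_zero (by positivity)] at h2k
  rw [sum_range_inv_two_mul_add_one]
  linarith

theorem log_pi_le_pi_div_exp_one : log π ≤ π / exp 1 := by
  have := log_le_sub_one_of_pos (div_pos pi_pos (exp_pos 1))
  rw [log_div pi_ne_zero (exp_pos 1).ne', log_exp] at this
  linarith

theorem pi_sub_two_add_sq_pi_div_48_lt :
    π - 2 + π ^ 2 / 48 < 3 * log 2 + eulerMascheroniConstant - log π := by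
  -- the cruder `log π ≤ 2 log 2` would not suffice
  have hlogπ : log π < 1.1558 := by
    refine log_pi_le_pi_div_exp_one.trans_lt ?_
    rw [div_lt_iff₀ (exp_pos 1)]
    nlinarith [pi_lt_d4, exp_one_gt_d9]
  nlinarith [pi_lt_d4, pi_gt_three, log_two_gt_d9, one_half_lt_eulerMascheroniConstant]

theorem mul_log_add_const_sub_one_le {k : ℝ} (hk : 1 ≤ k) :
    k * (log k + (4 * log 2 + eulerMascheroniConstant - log π)) - 1 ≤
      (2 * k + 1) * ((4 * log 2 + eulerMascheroniConstant - log π) / 2 + log k - log (k + 1) / 2) -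
        π ^ 2 / (32 * (2 * k + 1)) - π / 2 + 1 := by
  have hk0 : 0 < k := by linarith
  have hstep : k * (log (k + 1) - log k) ≤ 1 := by
    have := log_le_sub_one_of_pos (x := (k + 1) / k) (by positivity)
    rw [log_div (by positivity) hk0.ne', div_sub_one hk0.ne', add_sub_cancel_left,
      le_div_iff₀ hk0] at this
    linarith
  have hlog : log (k + 1) ≤ log 2 + log k := by
    rw [← log_mul two_ne_zero hk0.ne']; exact log_le_log (by positivity) (by linarith)
  have hsq : π ^ 2 / (32 * (2 * k + 1)) ≤ π ^ 2 / 96 := by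
    gcongr; linarith
  nlinarith [log_nonneg hk, pi_sub_two_add_sq_pi_div_48_lt]

theorem le_sum_inv_two_mul_cos {k : ℕ} (hk : 1 ≤ k) :
    (k / π) * (log k + (4 * log 2 + eulerMascheroniConstant - log π) - 1 / k) ≤
      ∑ j ∈ range k, 1 / (2 * cos (((j : ℝ) + 1) * π / (2 * k + 1))) := by
  have hk1 : (1 : ℝ) ≤ k := by exact_mod_cast hk
  set N : ℝ := 2 * k + 1 with hN
  set h := π / N with h_def
  set a := π / (2 * N) with a_def
  have hN0 : 0 < N := by positivity
  have hh : 0 < h := by positivity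
  have ha : 0 < a := by positivity
  have ha1 : a < 1 := by
    rw [a_def, div_lt_one (by positivity)]; linarith [pi_lt_d2]
  have hend : a + k * h = π / 2 := by rw [a_def, h_def, hN]; field_simp; ring
  have hcomp := le_mul_sum_inv_two_mul_sin ha hh.le k (by rw [hend]; linarith [pi_pos])
  rw [hend, cscRemainder_pi_div_two, cscRemainderAntideriv_pi_div_two] at hcomp
  have hodd : h * ∑ j ∈ range k, 1 / (2 * (a + j * h)) =
      ∑ j ∈ range k, 1 / (2 * (j : ℝ) + 1) := by
    rw [mul_sum]
    exact sum_congr rfl fun j _ ↦ by rw [a_def, h_def]; field_simp; ring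
  have hharm := sum_range_inv_two_mul_add_one_ge_log (k := k) (by omega)
  have hF := cscRemainderAntideriv_le ha (by linarith)
  have hg := mul_nonneg hh.le (cscRemainder_nonneg ha (by linarith [pi_gt_three]))
  have hnum := div_le_div_of_nonneg_right (mul_log_add_const_sub_one_le hk1) hN0.le
  rw [sum_inv_two_mul_cos_eq_sum_inv_two_mul_sin, ← mul_le_mul_iff_of_pos_left hh]
  have hlhs : h * (k / π * (log k + (4 * log 2 + eulerMascheroniConstant - log π) - 1 / k)) =
      (k * (log k + (4 * log 2 + eulerMascheroniConstant - log π)) - 1) / N := by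
    rw [h_def]; field_simp
  have hrhs : ((2 * k + 1) * ((4 * log 2 + eulerMascheroniConstant - log π) / 2 + log k -
      log (k + 1) / 2) - π ^ 2 / (32 * (2 * k + 1)) - π / 2 + 1) / N =
      (4 * log 2 + eulerMascheroniConstant - log π) / 2 + log k - log (k + 1) / 2 - a ^ 2 / 8 -
        h * (1 / 2 - 1 / π) := by
    rw [a_def, h_def, hN]; field_simp; ring
  rw [hlhs]
  linarith

theorem sum_sec_lower_bound (k : ℕ) (hk : 1 ≤ k) :
    (k / π) * (Real.log k + Real.log (16 * Real.exp Real.eulerMascheroniConstant / π) - 1 / k) ≤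
      ∑ j ∈ Finset.range k, 1 / (2 * Real.cos (((j : ℝ) + 1) * π / (2 * k + 1))) ∧
    (k / π) * Real.log (k / (2 ^ (-(4 : ℤ)) * Real.exp (-Real.eulerMascheroniConstant) * π)) -
        1 / π ≤
      ∑ j ∈ Finset.range k, 1 / (2 * Real.cos (((j : ℝ) + 1) * π / (2 * k + 1))) := by
  have hk0 : (k : ℝ) ≠ 0 := by positivity
  have hconst : log (16 * exp eulerMascheroniConstant / π) =
      4 * log 2 + eulerMascheroniConstant - log π := by
    rw [log_div (by positivity) pi_ne_zero, log_mul (by norm_num) (exp_pos _).ne', log_exp,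
      show (16 : ℝ) = 2 ^ 4 by norm_num, log_pow]
    push_cast; ring
  have hc₀ : (k : ℝ) / (2 ^ (-(4 : ℤ)) * exp (-eulerMascheroniConstant) * π) =
      k * (16 * exp eulerMascheroniConstant / π) := by
    rw [zpow_neg, exp_neg]; field_simp; norm_num
  have hbound := le_sum_inv_two_mul_cos hk
  rw [← hconst] at hbound
  refine ⟨hbound, hbound.trans_eq' ?_⟩
  rw [hc₀, log_mul hk0 (by positivity)]
  field_simp
end

section
/- For all n ∈ ℕ with n ≥ 1, the harmonic number H_n satisfies 1/(2n + 2/5) < H_n - log n - γ < 1/(2n + 1/3), where γ is the Euler–Mascheroni constant. Consequently H_{2n} - (1/2)H_n ≥ (1/2)(log(4n) + γ). -/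
open Real Filter Topology

/-!
Since `log (1 + 1/n) = log ((1 + x) / (1 - x)) = 2 ∑ x^(2k+1) / (2k+1)` with `x = 1 / (2n + 1)`,
cutting this series after two terms and bounding its tail by a geometric series shows that
`H_n - log n - 1 / (2n + 1/3)` increases and `H_n - log n - 1 / (2n + 2/5)` decreases for `n ≥ 1`.
Both sequences tend to `γ`, which gives the two bounds. The consequence combines the lower bound
at `2n` with the upper bound at `n`.
-/

namespace Real

theorem lt_log_one_add_sub_log_one_sub {x : ℝ} (hx₀ : 0 < x) (hx₁ : x < 1) :
    2 * x + 2 * x ^ 3 / 3 < log (1 + x) - log (1 - x) := by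
  have hle : 2 * x + 2 * x ^ 3 / 3 + 2 * x ^ 5 / 5 ≤ log (1 + x) - log (1 - x) := by
    have := sum_le_hasSum (Finset.range 3) (fun k _ ↦ by positivity)
      (hasSum_log_sub_log_of_abs_lt_one (abs_lt.2 ⟨by linarith, hx₁⟩))
    norm_num [Finset.sum_range_succ] at this
    linarith
  linarith [pow_pos hx₀ 5]

theorem log_one_add_sub_log_one_sub_lt {x : ℝ} (hx₀ : 0 < x) (hx₁ : x < 1) :
    log (1 + x) - log (1 - x) < 2 * x + 2 * x ^ 3 / (3 * (1 - x ^ 2)) := by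
  have hsum := (hasSum_nat_add_iff' 1).2
    (hasSum_log_sub_log_of_abs_lt_one (abs_lt.2 ⟨by linarith, hx₁⟩))
  have hgeom := (hasSum_geometric_of_lt_one (sq_nonneg x) (by nlinarith)).mul_left (2 / 3 * x ^ 3)
  have hterm (k : ℕ) : 2 * (1 / (2 * ((k + 1 : ℕ) : ℝ) + 1)) * x ^ (2 * (k + 1) + 1) =
      2 / (2 * k + 3) * x ^ 3 * (x ^ 2) ^ k := by
    push_cast; ring
  have hlt := hasSum_lt (i := 1) (fun k ↦ ?_) ?_ hsum hgeom
  · rw [Finset.sum_range_one] at hlt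
    have : 2 / 3 * x ^ 3 * (1 - x ^ 2)⁻¹ = 2 * x ^ 3 / (3 * (1 - x ^ 2)) := by field_simp
    norm_num at hlt
    linarith
  · rw [hterm]
    gcongr
    linarith
  · rw [hterm]
    gcongr
    norm_num

theorem log_add_one_sub_log_eq {t : ℝ} (ht : 0 < t) :
    log (t + 1) - log t = log (1 + 1 / (2 * t + 1)) - log (1 - 1 / (2 * t + 1)) := by
  have hx : 1 / (2 * t + 1) < 1 := (div_lt_one (by positivity)).2 (by linarith)
  rw [← log_div (by positivity) ht.ne', ← log_div (by positivity) (sub_pos.2 hx).ne']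
  congr 1
  field_simp
  ring

theorem log_add_one_sub_log_lt {t : ℝ} (ht : 1 ≤ t) :
    log (t + 1) - log t < 1 / (t + 1) + 1 / (2 * t + 1 / 3) - 1 / (2 * (t + 1) + 1 / 3) := by
  have ht₀ : 0 < t := by linarith
  have hx : 1 / (2 * t + 1) < 1 := (div_lt_one (by positivity)).2 (by linarith)
  have hsq : 1 - (1 / (2 * t + 1)) ^ 2 = 4 * t * (t + 1) / (2 * t + 1) ^ 2 := by
    field_simp; ring
  calc log (t + 1) - log t
      < 2 * (1 / (2 * t + 1)) + 2 * (1 / (2 * t + 1)) ^ 3 / (3 * (1 - (1 / (2 * t + 1)) ^ 2)) := by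
        rw [log_add_one_sub_log_eq ht₀]
        exact log_one_add_sub_log_one_sub_lt (by positivity) hx
    _ ≤ 1 / (t + 1) + 1 / (2 * t + 1 / 3) - 1 / (2 * (t + 1) + 1 / 3) := by
        rw [hsq]
        field_simp
        ring_nf
        nlinarith

theorem lt_log_add_one_sub_log {t : ℝ} (ht : 1 ≤ t) :
    1 / (t + 1) + 1 / (2 * t + 2 / 5) - 1 / (2 * (t + 1) + 2 / 5) < log (t + 1) - log t := by
  have ht₀ : 0 < t := by linarith
  have hx : 1 / (2 * t + 1) < 1 := (div_lt_one (by positivity)).2 (by linarith)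
  calc 1 / (t + 1) + 1 / (2 * t + 2 / 5) - 1 / (2 * (t + 1) + 2 / 5)
      ≤ 2 * (1 / (2 * t + 1)) + 2 * (1 / (2 * t + 1)) ^ 3 / 3 := by
        field_simp
        ring_nf
        nlinarith
    _ < log (t + 1) - log t := by
        rw [log_add_one_sub_log_eq ht₀]
        exact lt_log_one_add_sub_log_one_sub (by positivity) hx

end Real

theorem lt_of_tendsto_of_lt_succ {α : Type*} [Preorder α] [TopologicalSpace α]
    [OrderClosedTopology α] {u : ℕ → α} {L : α} {N n : ℕ} (hu : ∀ m, N ≤ m → u m < u (m + 1))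
    (hL : Tendsto u atTop (𝓝 L)) (hn : N ≤ n) : u n < L := by
  have hmono : Monotone fun m ↦ u (m + (n + 1)) :=
    monotone_nat_of_le_succ fun m ↦ by
      simpa only [Nat.add_right_comm] using (hu (m + (n + 1)) (by omega)).le
  calc u n < u (0 + (n + 1)) := by simpa using hu n hn
    _ ≤ L := hmono.ge_of_tendsto (hL.comp (tendsto_add_atTop_nat _)) 0

noncomputable def correctedEulerMascheroniSeq (c : ℝ) (n : ℕ) : ℝ :=
  harmonic n - log n - 1 / (2 * n + c)

theorem tendsto_correctedEulerMascheroniSeq (c : ℝ) :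
    Tendsto (correctedEulerMascheroniSeq c) atTop (𝓝 eulerMascheroniConstant) := by
  have hcorr : Tendsto (fun n : ℕ ↦ 1 / (2 * (n : ℝ) + c)) atTop (𝓝 0) := by
    simpa only [one_div, Function.comp_def] using tendsto_inv_atTop_zero.comp <|
      tendsto_atTop_add_const_right _ c <| tendsto_natCast_atTop_atTop.const_mul_atTop two_pos
  rw [← sub_zero eulerMascheroniConstant]
  exact tendsto_harmonic_sub_log.sub hcorr

theorem correctedEulerMascheroniSeq_succ (c : ℝ) (n : ℕ) :
    correctedEulerMascheroniSeq c (n + 1) = correctedEulerMascheroniSeq c n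
      + (1 / (n + 1) - (log (n + 1) - log n) + 1 / (2 * n + c) - 1 / (2 * (n + 1) + c)) := by
  simp only [correctedEulerMascheroniSeq, harmonic_succ]
  push_cast
  ring

theorem correctedEulerMascheroniSeq_lt_eulerMascheroniConstant {n : ℕ} (hn : 1 ≤ n) :
    correctedEulerMascheroniSeq (1 / 3) n < eulerMascheroniConstant := by
  refine lt_of_tendsto_of_lt_succ (fun m hm ↦ ?_) (tendsto_correctedEulerMascheroniSeq _) hn
  have := log_add_one_sub_log_lt (t := m) (by exact_mod_cast hm)
  rw [correctedEulerMascheroniSeq_succ]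
  linarith

theorem eulerMascheroniConstant_lt_correctedEulerMascheroniSeq {n : ℕ} (hn : 1 ≤ n) :
    eulerMascheroniConstant < correctedEulerMascheroniSeq (2 / 5) n := by
  refine lt_of_tendsto_of_lt_succ (α := ℝᵒᵈ) (fun m hm ↦ ?_)
    (tendsto_correctedEulerMascheroniSeq _) hn
  have := lt_log_add_one_sub_log (t := m) (by exact_mod_cast hm)
  change correctedEulerMascheroniSeq _ (m + 1) < _
  rw [correctedEulerMascheroniSeq_succ]
  linarith

theorem harmonic_number_bounds :
    ∀ n : ℕ, 1 ≤ n →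
      (1 / (2 * (n : ℝ) + 2 / 5) < (harmonic n : ℝ) - Real.log n -
          Real.eulerMascheroniConstant ∧
        (harmonic n : ℝ) - Real.log n - Real.eulerMascheroniConstant <
          1 / (2 * (n : ℝ) + 1 / 3)) ∧
      (1 / 2) * (Real.log (4 * n) + Real.eulerMascheroniConstant) ≤
        (harmonic (2 * n) : ℝ) - (1 / 2) * (harmonic n : ℝ) := by
  intro n hn
  have hlower := eulerMascheroniConstant_lt_correctedEulerMascheroniSeq hn
  have hupper := correctedEulerMascheroniSeq_lt_eulerMascheroniConstant hn
  have hlower₂ := eulerMascheroniConstant_lt_correctedEulerMascheroniSeq (n := 2 * n) (by omega)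
  simp only [correctedEulerMascheroniSeq] at hlower hupper hlower₂
  refine ⟨⟨by linarith, by linarith⟩, ?_⟩
  have hn₀ : (n : ℝ) ≠ 0 := by positivity
  have hlog : log (4 * n) = 2 * log (2 * n) - log n := by
    rw [show (4 : ℝ) * n = (2 * n) ^ 2 / n by field_simp; ring, log_div (by positivity) hn₀,
      log_pow]
    push_cast
    ring
  have hcorr : 1 / 2 * (1 / (2 * n + 1 / 3)) ≤ 1 / (2 * (2 * n : ℕ) + 2 / 5 : ℝ) := by
    rw [one_div_mul_one_div]
    gcongr
    push_cast
    linarith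
  push_cast at hlower₂ hcorr
  linarith
end
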